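/- arXiv:1105.3752 — 11 statements merged into one kernel-verified Lean document; each statement's English description precedes it below -/
import Mathlib

section
/- Let n ≥ 2, let f : ℂⁿ → ℂ be complex-differentiable at z with complex gradient (∂f/∂z₁(z), …, ∂f/∂zₙ(z)) ≠ 0, and let g : ℂⁿ → ℝ be real-differentiable at z, with real Fréchet derivative Dg_z. Define the Wirtinger derivatives ∂g/∂z_j(z) := (1/2)(Dg_z(e_j) − i·Dg_z(i·e_j)) ∈ ℂ, where e_j is the j-th standard basis vector of ℂⁿ. Then Dg_z vanishes on the kernel of Df_z (i.e. Dg_z(v) = 0 for every v ∈ ℂⁿ with Σ_j ∂f/∂z_j(z)·v_j = 0) if and only if ∂g/∂z_k(z)·∂f/∂z_j(z) = ∂g/∂z_j(z)·∂f/∂z_k(z) for all 1 ≤ j, k ≤ n. -/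
/-- Proposition 6.2: for `f` complex-differentiable at `z` with nonvanishing complex
gradient and `g` real-differentiable at `z`, the real derivative `Dg_z` vanishes on the
kernel of `Df_z` (i.e. `z` is a contact point of the foliation `{f = const}` with the
level sets of `g`) iff the Wirtinger-derivative equations
`∂g/∂z_k·∂f/∂z_j = ∂g/∂z_j·∂f/∂z_k` hold for all `j, k`. -/
theorem stmt4 (n : ℕ) (hn : 2 ≤ n) (f : (Fin n → ℂ) → ℂ) (g : (Fin n → ℂ) → ℝ)
    (z : Fin n → ℂ) (hf : DifferentiableAt ℂ f z) (hg : DifferentiableAt ℝ g z)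
    (hgrad : (fun j : Fin n => fderiv ℂ f z (Pi.single j 1)) ≠ 0)
    (wg : Fin n → ℂ)
    (hwg : ∀ j : Fin n, wg j = (1/2 : ℂ) *
        (((fderiv ℝ g z (Pi.single j 1) : ℝ) : ℂ)
          - Complex.I * ((fderiv ℝ g z (Complex.I • (Pi.single j 1 : Fin n → ℂ)) : ℝ) : ℂ))) :
    (∀ v : Fin n → ℂ, (∑ j, fderiv ℂ f z (Pi.single j 1) * v j = 0) →
        fderiv ℝ g z v = 0) ↔
      (∀ j k : Fin n, wg k * fderiv ℂ f z (Pi.single j 1)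
        = wg j * fderiv ℂ f z (Pi.single k 1)) := by
  set D := fderiv ℝ g z with hD
  set wf : Fin n → ℂ := fun j => fderiv ℂ f z (Pi.single j 1) with hwf
  have key : ∀ v : Fin n → ℂ, D v = (2 * ∑ j, wg j * v j).re := by
    intro v
    have hv : v = ∑ j, (((v j).re : ℝ) • (Pi.single j 1 : Fin n → ℂ)
        + ((v j).im : ℝ) • (Complex.I • (Pi.single j 1 : Fin n → ℂ))) := by
      funext i
      rw [Finset.sum_apply]
      rw [Finset.sum_eq_single i]
      · simp [Complex.real_smul]
      · intro b _ hb
        simp [Pi.single_apply, Ne.symm hb]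
      · simp
    have lhs : D v = ∑ j, ((v j).re * D (Pi.single j 1)
        + (v j).im * D (Complex.I • (Pi.single j 1 : Fin n → ℂ))) := by
      conv_lhs => rw [hv]
      rw [map_sum]
      refine Finset.sum_congr rfl fun j _ => ?_
      rw [map_add, map_smul, map_smul, smul_eq_mul, smul_eq_mul]
    rw [lhs, Finset.mul_sum, Complex.re_sum]
    refine Finset.sum_congr rfl fun j _ => ?_
    rw [hwg j]
    set A : ℝ := D (Pi.single j 1)
    set B : ℝ := D (Complex.I • (Pi.single j 1 : Fin n → ℂ))
    have : 2 * ((1/2 : ℂ) * ((A:ℂ) - Complex.I * (B:ℂ)) * v j)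
        = ((A:ℂ) - Complex.I * (B:ℂ)) * v j := by ring
    rw [show 2 * ((1/2 : ℂ) * ((A:ℂ) - Complex.I * (B:ℂ)) * v j)
        = ((A:ℂ) - Complex.I * (B:ℂ)) * v j from by ring]
    simp [Complex.mul_re, Complex.sub_re, Complex.sub_im, Complex.mul_im]
    ring
  constructor
  · intro h j k
    by_cases hjk : j = k
    · rw [hjk]
    · set v : Fin n → ℂ := fun l => (Pi.single j (wf k) : Fin n → ℂ) l
        - (Pi.single k (wf j) : Fin n → ℂ) l with hvdef
      have hval : ∀ l, v l = (if l = j then wf k else 0) - (if l = k then wf j else 0) := by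
        intro l
        simp only [hvdef, Pi.single_apply]
      have hsumv : ∀ c : Fin n → ℂ, (∑ l, c l * v l) = c j * wf k - c k * wf j := by
        intro c
        have hterm : ∀ l, c l * v l = (if l = j then c l * wf k else 0)
            - (if l = k then c l * wf j else 0) := by
          intro l
          rw [hval l]
          by_cases h1 : l = j <;> by_cases h2 : l = k
          · exact absurd (h1.symm.trans h2) hjk
          · simp [h1, h2, Ne.symm hjk, hjk]
          · simp [h1, h2, Ne.symm hjk, hjk]
          · simp [h1, h2]
        rw [Finset.sum_congr rfl fun l _ => hterm l]
        simp [Finset.sum_sub_distrib, Finset.sum_ite_eq']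
      have hker : (∑ l, wf l * v l) = 0 := by rw [hsumv]; ring
      have hkerI : (∑ l, wf l * (Complex.I • v) l) = 0 := by
        have : (∑ l, wf l * (Complex.I • v) l) = Complex.I * ∑ l, wf l * v l := by
          rw [Finset.mul_sum]; refine Finset.sum_congr rfl fun l _ => ?_
          simp; ring
        rw [this, hker, mul_zero]
      have e1 : D v = 0 := h v hker
      have e2 : D (Complex.I • v) = 0 := h _ hkerI
      rw [key] at e1 e2
      have hs1 : (∑ l, wg l * v l) = wg j * wf k - wg k * wf j := hsumv wg
      have hs2 : (∑ l, wg l * (Complex.I • v) l) = Complex.I * ∑ l, wg l * v l := by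
        rw [Finset.mul_sum]; refine Finset.sum_congr rfl fun l _ => ?_
        simp; ring
      rw [hs1] at e1
      rw [hs2, hs1] at e2
      set c := wg j * wf k - wg k * wf j with hc
      have hre : c.re = 0 := by
        have := e1; simp [Complex.mul_re] at this; linarith
      have him : c.im = 0 := by
        have := e2
        simp [Complex.mul_re, Complex.mul_im] at this
        linarith
      have hc0 : c = 0 := Complex.ext hre him
      have := sub_eq_zero.mp hc0
      linear_combination -this
  · intro h v hker
    obtain ⟨k0, hk0⟩ : ∃ k, wf k ≠ 0 := Function.ne_iff.mp hgrad
    have hprop : ∀ j, wg j = wg k0 / wf k0 * wf j := by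
      intro j
      have := h j k0
      field_simp
      linear_combination -this
    rw [key]
    have : (∑ j, wg j * v j) = wg k0 / wf k0 * ∑ j, wf j * v j := by
      rw [Finset.mul_sum]
      refine Finset.sum_congr rfl fun j _ => ?_
      rw [hprop j]; ring
    rw [this, hker, mul_zero, mul_zero, Complex.zero_re]
end

section
/- Let n ≥ 2 and let f : ℂⁿ → ℂ be complex-differentiable at a point z with complex gradient (∂f/∂z₁(z), …, ∂f/∂zₙ(z)) ≠ 0. Then Re⟨v, z⟩ = 0 for every v ∈ ℂⁿ in the kernel of Df_z (i.e. for every v with Σ_j ∂f/∂z_j(z)·v_j = 0, where ⟨v, z⟩ = Σ_j v_j·conj(z_j) is the standard Hermitian product) if and only if conj(z_k)·∂f/∂z_j(z) = conj(z_j)·∂f/∂z_k(z) for all 1 ≤ j, k ≤ n. -/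
private lemma sum_mul_single_aux {n : ℕ} (g : Fin n → ℂ) (j : Fin n) (c : ℂ) :
    (∑ i, g i * (Pi.single j c : Fin n → ℂ) i) = g j * c := by
  rw [Finset.sum_eq_single j]
  · simp
  · intro i _ hij
    rw [Pi.single_eq_of_ne hij, mul_zero]
  · intro h; exact absurd (Finset.mem_univ j) h

private lemma single_mul_aux {n : ℕ} (w : Fin n → ℂ) (j : Fin n) (c : ℂ) :
    (∑ i, (Pi.single j c : Fin n → ℂ) i * w i) = c * w j := by
  rw [Finset.sum_eq_single j]
  · simp
  · intro i _ hij
    rw [Pi.single_eq_of_ne hij, zero_mul]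
  · intro h; exact absurd (Finset.mem_univ j) h

private lemma stmt5_aux {n : ℕ} (g z : Fin n → ℂ) (hg : g ≠ 0) :
    (∀ v : Fin n → ℂ, (∑ j, g j * v j = 0) →
        (∑ j, v j * (starRingEnd ℂ) (z j)).re = 0) ↔
      (∀ j k : Fin n, (starRingEnd ℂ) (z k) * g j = (starRingEnd ℂ) (z j) * g k) := by
  constructor
  · intro H j k
    by_cases hjk : j = k
    · rw [hjk]
    · set v : Fin n → ℂ := (Pi.single j (g k) : Fin n → ℂ) + (Pi.single k (-(g j)) : Fin n → ℂ) with hv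
      have hvsum : ∀ c : ℂ, (∑ i, g i * (c • v) i) = 0 := by
        intro c
        have : (∑ i, g i * (c • v) i) = c * ∑ i, g i * v i := by
          rw [Finset.mul_sum]
          exact Finset.sum_congr rfl fun i _ => by simp; ring
        rw [this, hv]
        have : (∑ i, g i * ((Pi.single j (g k) : Fin n → ℂ) + (Pi.single k (-(g j)) : Fin n → ℂ)) i)
            = (∑ i, g i * (Pi.single j (g k) : Fin n → ℂ) i) + ∑ i, g i * (Pi.single k (-(g j)) : Fin n → ℂ) i := by
          rw [← Finset.sum_add_distrib]
          exact Finset.sum_congr rfl fun i _ => by simp [mul_add]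
        rw [this, sum_mul_single_aux, sum_mul_single_aux]
        ring
      have hvz : ∀ c : ℂ, (∑ i, (c • v) i * (starRingEnd ℂ) (z i))
          = c * (g k * (starRingEnd ℂ) (z j) - g j * (starRingEnd ℂ) (z k)) := by
        intro c
        have : (∑ i, (c • v) i * (starRingEnd ℂ) (z i))
            = c * ∑ i, v i * (starRingEnd ℂ) (z i) := by
          rw [Finset.mul_sum]
          exact Finset.sum_congr rfl fun i _ => by simp; ring
        rw [this, hv]
        have : (∑ i, ((Pi.single j (g k) : Fin n → ℂ) + (Pi.single k (-(g j)) : Fin n → ℂ)) i * (starRingEnd ℂ) (z i))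
            = (∑ i, (Pi.single j (g k) : Fin n → ℂ) i * (starRingEnd ℂ) (z i))
              + ∑ i, (Pi.single k (-(g j)) : Fin n → ℂ) i * (starRingEnd ℂ) (z i) := by
          rw [← Finset.sum_add_distrib]
          exact Finset.sum_congr rfl fun i _ => by simp [add_mul]
        rw [this, single_mul_aux, single_mul_aux]
        ring
      set w : ℂ := g k * (starRingEnd ℂ) (z j) - g j * (starRingEnd ℂ) (z k) with hw
      have h1 : w.re = 0 := by
        have := H ((1 : ℂ) • v) (hvsum 1)
        rwa [hvz 1, one_mul] at this
      have h2 : w.im = 0 := by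
        have := H (Complex.I • v) (hvsum Complex.I)
        rw [hvz Complex.I] at this
        simpa using this
      have hw0 : w = 0 := Complex.ext h1 h2
      have heq : g k * (starRingEnd ℂ) (z j) = g j * (starRingEnd ℂ) (z k) :=
        sub_eq_zero.mp hw0
      linear_combination -heq
  · intro H v hv
    obtain ⟨k, hk'⟩ := Function.ne_iff.mp hg
    have hk : g k ≠ 0 := by simpa using hk'
    have key : ∀ j, (starRingEnd ℂ) (z j)
        = (starRingEnd ℂ) (z k) * g j * (g k)⁻¹ := by
      intro j
      field_simp
      linear_combination -(H j k)
    have : (∑ j, v j * (starRingEnd ℂ) (z j)) = 0 := by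
      calc (∑ j, v j * (starRingEnd ℂ) (z j))
          = ∑ j, ((starRingEnd ℂ) (z k) * (g k)⁻¹) * (g j * v j) := by
            refine Finset.sum_congr rfl fun j _ => ?_
            rw [key j]; ring
        _ = ((starRingEnd ℂ) (z k) * (g k)⁻¹) * ∑ j, g j * v j := by
            rw [Finset.mul_sum]
        _ = 0 := by rw [hv, mul_zero]
    rw [this]; simp

/-- Proposition 6.2 for the Morse function `Q(z) = Σ|z_j|²`: for `f` complex-differentiable
at `z` with nonvanishing complex gradient, `Re⟨v, z⟩ = 0` for every `v` in the kernel of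
`Df_z` iff `conj(z_k)·∂f/∂z_j(z) = conj(z_j)·∂f/∂z_k(z)` for all `j, k`. -/
theorem stmt5 (n : ℕ) (hn : 2 ≤ n) (f : (Fin n → ℂ) → ℂ) (z : Fin n → ℂ)
    (hf : DifferentiableAt ℂ f z)
    (hgrad : (fun j : Fin n => fderiv ℂ f z (Pi.single j 1)) ≠ 0) :
    (∀ v : Fin n → ℂ, (∑ j, fderiv ℂ f z (Pi.single j 1) * v j = 0) →
        (∑ j, v j * (starRingEnd ℂ) (z j)).re = 0) ↔
      (∀ j k : Fin n, (starRingEnd ℂ) (z k) * fderiv ℂ f z (Pi.single j 1)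
        = (starRingEnd ℂ) (z j) * fderiv ℂ f z (Pi.single k 1)) := by
  exact stmt5_aux (fun j => fderiv ℂ f z (Pi.single j 1)) z hgrad
end

section
/- Let n ≥ 2, let k > 2 be a natural number, and let λ₁, …, λₙ be nonzero complex numbers. Define Φ : ℂⁿ → ℂ^{n−1} by Φ(z)_j = λ₁ z₁^{k−1}·conj(z_j) − λ_j z_j^{k−1}·conj(z₁) for j = 2, …, n. Then for every z ∈ ℂⁿ with z₁ ≠ 0 and Φ(z) = 0, the real Fréchet derivative of Φ at z, as an ℝ-linear map ℂⁿ → ℂ^{n−1} (identifying ℂⁿ ≅ ℝ^{2n} and ℂ^{n−1} ≅ ℝ^{2n−2}), is surjective. -/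
/-!
Restricted to directions `v` with `v₁ = 0`, the derivative of `Φ` decouples: its `j`-th
component is the `ℝ`-linear map `x ↦ a · conj x + b · x` of `v_j`, with
`a = λ₁ z₁^(k-1)` and `b = -(k-1) λ_j z_j^(k-2) conj z₁`. Such a map is invertible as soon as
`‖a‖ ≠ ‖b‖`. Here `a ≠ 0`, and taking norms in `Φ(z)_j = 0` gives `‖b‖ = (k-1) ‖a‖` when
`z_j ≠ 0`, while `b = 0` when `z_j = 0`; so `k > 2` makes every component onto.
-/

open ContinuousLinearMap

theorem surjective_mul_conj_add_mul {a b : ℂ} (h : ‖a‖ ≠ ‖b‖) :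
    Function.Surjective fun x : ℂ => a * starRingEnd ℂ x + b * x := by
  have hdet : ((‖b‖ ^ 2 - ‖a‖ ^ 2 : ℝ) : ℂ) ≠ 0 := by
    rw [Complex.ofReal_ne_zero, sub_ne_zero, Ne,
      pow_left_inj₀ (norm_nonneg _) (norm_nonneg _) two_ne_zero]
    exact h.symm
  intro w
  refine ⟨(starRingEnd ℂ b * w - a * starRingEnd ℂ w) / ((‖b‖ ^ 2 - ‖a‖ ^ 2 : ℝ) : ℂ), ?_⟩
  simp only [map_div₀, map_sub, map_mul, Complex.conj_conj, Complex.conj_ofReal]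
  rw [mul_div_assoc', mul_div_assoc', ← add_div, div_eq_iff hdet]
  push_cast
  rw [← Complex.mul_conj', ← Complex.mul_conj']
  ring

theorem norm_mul_pow_ne_norm_natCast_mul {c d p q : ℂ} {m : ℕ} (hm : 2 ≤ m) (hc : c ≠ 0)
    (hp : p ≠ 0) (h : c * p ^ m * starRingEnd ℂ q = d * q ^ m * starRingEnd ℂ p) :
    ‖c * p ^ m‖ ≠ ‖d * (m * q ^ (m - 1)) * starRingEnd ℂ p‖ := by
  have ha : 0 < ‖c * p ^ m‖ := norm_pos_iff.2 (mul_ne_zero hc (pow_ne_zero m hp))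
  rcases eq_or_ne q 0 with rfl | hq
  · simpa [zero_pow (by omega : m - 1 ≠ 0)] using ha.ne'
  have hE := congrArg norm h
  simp only [norm_mul, norm_pow, Complex.norm_conj, Complex.norm_natCast] at hE ha ⊢
  have hnorm : ‖d‖ * ‖q‖ ^ (m - 1) * ‖p‖ = ‖c‖ * ‖p‖ ^ m := by
    refine mul_right_cancel₀ (norm_ne_zero_iff.2 hq) ?_
    rw [hE, mul_right_comm _ ‖p‖, mul_assoc ‖d‖, ← pow_succ, Nat.sub_add_cancel (by omega)]
  have hm' : (1 : ℝ) < m := by exact_mod_cast hm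
  refine (lt_mul_left ha hm').trans_eq ?_ |>.ne
  rw [← hnorm]
  ring

section FermatPolarMap

variable {ι : Type*} [Fintype ι]

theorem hasFDerivAt_pow_mul_conj (m : ℕ) (i j : ι) (z : ι → ℂ) :
    HasFDerivAt (fun w : ι → ℂ => w i ^ m * starRingEnd ℂ (w j))
      (z i ^ m • (Complex.conjCLE : ℂ →L[ℝ] ℂ).comp (proj j)
        + starRingEnd ℂ (z j) • (m • z i ^ (m - 1)) • proj i) z :=
  ((hasFDerivAt_apply i z).pow m).mul
    (Complex.conjCLE.hasFDerivAt.comp z (hasFDerivAt_apply j z))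

theorem fderiv_pow_mul_conj_apply (m : ℕ) (i j : ι) (z v : ι → ℂ) :
    fderiv ℝ (fun w : ι → ℂ => w i ^ m * starRingEnd ℂ (w j)) z v
      = z i ^ m * starRingEnd ℂ (v j) + m * z i ^ (m - 1) * v i * starRingEnd ℂ (z j) := by
  rw [(hasFDerivAt_pow_mul_conj m i j z).fderiv]
  simp only [nsmul_eq_mul, add_apply, smul_apply, comp_apply, proj_apply,
    ContinuousLinearEquiv.coe_coe, ContinuousAlgEquiv.coeCLE_apply, Complex.conjCAE_apply,
    smul_eq_mul, add_right_inj]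
  ring

/-- The paper's `Φ` for `H = ∑ λ_i z_i^(m+1)`, with the coordinate `z₁` indexed by `i₀`. -/
def fermatPolarMap (i₀ : ι) (lam : ι → ℂ) (m : ℕ) : (ι → ℂ) → {j // j ≠ i₀} → ℂ :=
  fun w j => lam i₀ * (w i₀ ^ m * starRingEnd ℂ (w j)) - lam j * (w j ^ m * starRingEnd ℂ (w i₀))

variable (i₀ : ι) (lam : ι → ℂ)

theorem fderiv_fermatPolarMap_apply (m : ℕ) (z v : ι → ℂ) (j : {j // j ≠ i₀}) :
    fderiv ℝ (fermatPolarMap i₀ lam m) z v j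
      = lam i₀ * (z i₀ ^ m * starRingEnd ℂ (v j)
          + m * z i₀ ^ (m - 1) * v i₀ * starRingEnd ℂ (z j))
        - lam j * (z j ^ m * starRingEnd ℂ (v i₀)
          + m * z j ^ (m - 1) * v j * starRingEnd ℂ (z i₀)) := by
  have hd (i j : ι) := (hasFDerivAt_pow_mul_conj m i j z).differentiableAt.hasFDerivAt
  have hΦ : HasFDerivAt (fermatPolarMap i₀ lam m) (pi fun j : {j // j ≠ i₀} =>
      lam i₀ • fderiv ℝ (fun w : ι → ℂ => w i₀ ^ m * starRingEnd ℂ (w j)) z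
        - lam j • fderiv ℝ (fun w : ι → ℂ => w j ^ m * starRingEnd ℂ (w i₀)) z) z :=
    hasFDerivAt_pi.2 fun j => ((hd i₀ j).const_mul _).sub ((hd j i₀).const_mul _)
  rw [hΦ.fderiv]
  simp only [pi_apply, sub_apply, smul_apply, smul_eq_mul, fderiv_pow_mul_conj_apply]

theorem surjective_fderiv_fermatPolarMap [DecidableEq ι] {m : ℕ} (hm : 2 ≤ m) {z : ι → ℂ}
    (hlam : lam i₀ ≠ 0) (hz : z i₀ ≠ 0) (hzΦ : fermatPolarMap i₀ lam m z = 0) :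
    Function.Surjective (fderiv ℝ (fermatPolarMap i₀ lam m) z) := by
  intro w
  have hsolve (j : {j // j ≠ i₀}) := surjective_mul_conj_add_mul
    (a := lam i₀ * z i₀ ^ m) (b := -(lam j * (m * z j ^ (m - 1)) * starRingEnd ℂ (z i₀)))
    (by
      rw [norm_neg]
      refine norm_mul_pow_ne_norm_natCast_mul hm hlam hz ?_
      simpa [fermatPolarMap, sub_eq_zero, mul_assoc] using congrFun hzΦ j) (w j)
  choose x hx using hsolve
  refine ⟨fun i => if h : i = i₀ then 0 else x ⟨i, h⟩, funext fun j => ?_⟩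
  rw [fderiv_fermatPolarMap_apply, ← hx j]
  simp only [dif_pos, dif_neg j.2, map_zero, mul_zero, zero_mul, add_zero]
  ring

end FermatPolarMap

/-- Proposition 5.2: for the Fermat polynomial `H(z) = λ₁z₁^k + … + λₙzₙ^k` with `k > 2`
(here `n + 2 ≥ 2` variables), the defining map `Φ` of the polar variety
`M(H_k, Q)`, `Φ(z)_j = λ₁ z₁^{k−1}·conj(z_j) − λ_j z_j^{k−1}·conj(z₁)` (`j ≠ 1`), has
surjective real Fréchet derivative at every point of `Φ⁻¹(0)` with `z₁ ≠ 0`; hence away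
from the origin the polar variety is a reduced smooth submanifold of real dimension 2. -/
theorem stmt7 (n k : ℕ) (hk : 2 < k) (lam : Fin (n + 2) → ℂ) (hlam : ∀ i, lam i ≠ 0)
    (Φ : (Fin (n + 2) → ℂ) → ({j : Fin (n + 2) // j ≠ 0} → ℂ))
    (hΦ : ∀ (z : Fin (n + 2) → ℂ) (j : {j : Fin (n + 2) // j ≠ 0}),
      Φ z j = lam 0 * z 0 ^ (k - 1) * (starRingEnd ℂ) (z j.1)
        - lam j.1 * z j.1 ^ (k - 1) * (starRingEnd ℂ) (z 0))
    (z : Fin (n + 2) → ℂ) (hz : z 0 ≠ 0) (hzΦ : Φ z = 0) :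
    Function.Surjective (fderiv ℝ Φ z) := by
  obtain rfl : Φ = fermatPolarMap 0 lam (k - 1) := by
    funext w j
    rw [hΦ, fermatPolarMap]
    ring
  exact surjective_fderiv_fermatPolarMap 0 lam (by omega) (hlam 0) hz hzΦ
end

section
/- Let m ≥ 1, let d ∈ ℂ and c : Fin m → ℂ. Let B be the 2m × 2m complex matrix which is block diagonal with j-th 2×2 block [[−c_j + conj(d), d − conj(c_j)], [−i·c_j − i·conj(d), i·d + i·conj(c_j)]]. Then det B = (2i)^m · ∏_{j} (|d|² − |c_j|²), where each real number |d|² − |c_j|² is regarded as a complex number. -/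
/-- Lemma 5.3 (first part): the determinant of the block-diagonal matrix `B` with
`2 × 2` blocks `[[−c_j + conj d, d − conj c_j], [−i·c_j − i·conj d, i·d + i·conj c_j]]`
equals `(2i)^m · ∏_j (|d|² − |c_j|²)`. -/
theorem stmt8 (m : ℕ) (hm : 1 ≤ m) (d : ℂ) (c : Fin m → ℂ)
    (B : Matrix (Fin 2 × Fin m) (Fin 2 × Fin m) ℂ)
    (hB : B = Matrix.blockDiagonal (fun j : Fin m =>
      !![-c j + (starRingEnd ℂ) d, d - (starRingEnd ℂ) (c j);
         -(Complex.I * c j) - Complex.I * (starRingEnd ℂ) d,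
         Complex.I * d + Complex.I * (starRingEnd ℂ) (c j)])) :
    B.det = (2 * Complex.I) ^ m *
      ∏ j : Fin m, ((Complex.normSq d - Complex.normSq (c j) : ℝ) : ℂ) := by
  subst hB
  rw [Matrix.det_blockDiagonal]
  have h : ∀ j : Fin m,
      (!![-c j + (starRingEnd ℂ) d, d - (starRingEnd ℂ) (c j);
         -(Complex.I * c j) - Complex.I * (starRingEnd ℂ) d,
         Complex.I * d + Complex.I * (starRingEnd ℂ) (c j)]).det
      = 2 * Complex.I * ((Complex.normSq d - Complex.normSq (c j) : ℝ) : ℂ) := by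
    intro j
    rw [Matrix.det_fin_two_of]
    push_cast
    rw [← Complex.mul_conj, ← Complex.mul_conj]
    ring
  simp only [h]
  rw [Finset.prod_mul_distrib, Finset.prod_const, Finset.card_univ, Fintype.card_fin]
end

section
/- Let n ≥ 2, let k > 2 be a natural number, and let λ₁, …, λₙ be nonzero complex numbers. Suppose z ∈ ℂⁿ satisfies z₁ ≠ 0 and λ₁ z₁^{k−1}·conj(z_j) = λ_j z_j^{k−1}·conj(z₁) for all j = 2, …, n. Then for every j = 2, …, n one has |λ₁|²·|z₁|^{2(k−1)} ≠ (k−1)²·|λ_j|²·|z_j|^{2(k−2)}·|z₁|². -/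
/-!
Taking norms in the polar equation gives `‖λ₁‖ ‖z₁‖^{k-1} ‖z_j‖ = ‖λ_j‖ ‖z_j‖^{k-1} ‖z₁‖`.
If `z_j ≠ 0` this says `|d(z)| = ‖λ_j‖ ‖z_j‖^{k-2} ‖z₁‖`, so `|c_j(z)| = (k-1) |d(z)|`, and
`|d(z)| > 0` together with `k - 1 ≥ 2` rules out equality. If `z_j = 0`, then `c_j(z) = 0` because
`k - 2 ≥ 1`, while `d(z) ≠ 0`.
-/

open ComplexConjugate

theorem norm_mul_pow_succ_eq_of_mul_pow_succ_mul_conj_eq {a b x y : ℂ} {m : ℕ} (hy : y ≠ 0)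
    (h : a * x ^ (m + 1) * conj y = b * y ^ (m + 1) * conj x) :
    ‖a‖ * ‖x‖ ^ (m + 1) = ‖b‖ * ‖y‖ ^ m * ‖x‖ := by
  have hnorm := congrArg (‖·‖) h
  simp only [norm_mul, norm_pow, Complex.norm_conj, pow_succ] at hnorm
  have hy' : ‖y‖ ≠ 0 := norm_ne_zero_iff.mpr hy
  apply mul_right_cancel₀ hy'
  linear_combination hnorm

/-- Lemma 5.3 (second part): at every point of the polar variety of the Fermat foliation
(`λ₁ z₁^{k−1}·conj(z_j) = λ_j z_j^{k−1}·conj(z₁)` for all `j ≠ 1`) with `z₁ ≠ 0` and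
`k > 2`, one has `|d(z)|² ≠ |c_j(z)|²`, i.e.
`|λ₁|²·|z₁|^{2(k−1)} ≠ (k−1)²·|λ_j|²·|z_j|^{2(k−2)}·|z₁|²` for every `j ≠ 1`. -/
theorem stmt9 (n k : ℕ) (hk : 2 < k) (lam : Fin (n + 2) → ℂ) (hlam : ∀ i, lam i ≠ 0)
    (z : Fin (n + 2) → ℂ) (hz : z 0 ≠ 0)
    (heq : ∀ j : Fin (n + 2), j ≠ 0 →
      lam 0 * z 0 ^ (k - 1) * (starRingEnd ℂ) (z j)
        = lam j * z j ^ (k - 1) * (starRingEnd ℂ) (z 0)) :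
    ∀ j : Fin (n + 2), j ≠ 0 →
      ‖lam 0‖ ^ 2 * ‖z 0‖ ^ (2 * (k - 1)) ≠
        ((k - 1 : ℕ) : ℝ) ^ 2 * ‖lam j‖ ^ 2 *
          ‖z j‖ ^ (2 * (k - 2)) * ‖z 0‖ ^ 2 := by
  intro j hj
  obtain ⟨m, rfl⟩ : ∃ m, k = m + 2 := ⟨k - 2, by omega⟩
  have hm : m ≠ 0 := by omega
  simp only [show m + 2 - 1 = m + 1 by omega, Nat.add_sub_cancel] at heq ⊢
  have hd : 0 < ‖lam 0‖ * ‖z 0‖ ^ (m + 1) := by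
    have := norm_pos_iff.mpr (hlam 0)
    have := norm_pos_iff.mpr hz
    positivity
  rw [show ‖lam 0‖ ^ 2 * ‖z 0‖ ^ (2 * (m + 1)) = (‖lam 0‖ * ‖z 0‖ ^ (m + 1)) ^ 2 by ring,
    show ((m + 1 : ℕ) : ℝ) ^ 2 * ‖lam j‖ ^ 2 * ‖z j‖ ^ (2 * m) * ‖z 0‖ ^ 2
      = ((m + 1 : ℕ) : ℝ) ^ 2 * (‖lam j‖ * ‖z j‖ ^ m * ‖z 0‖) ^ 2 by ring]
  by_cases hzj : z j = 0
  · rw [hzj, norm_zero, zero_pow hm, mul_zero, zero_mul, zero_pow two_ne_zero, mul_zero]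
    exact pow_ne_zero 2 hd.ne'
  · rw [← norm_mul_pow_succ_eq_of_mul_pow_succ_mul_conj_eq hzj (heq j hj)]
    have hm1 : (1 : ℝ) < ((m + 1 : ℕ) : ℝ) ^ 2 := by
      have : (2 : ℝ) ≤ ((m + 1 : ℕ) : ℝ) := by exact_mod_cast (by omega : 2 ≤ m + 1)
      nlinarith
    nlinarith [pow_pos hd 2]
end

section
/- Let n ≥ 2, let k > 2 be a natural number, and let λ₁, …, λₙ be nonzero complex numbers. Define Φ : ℂⁿ → ℂ^{n−1} by Φ(z)_j = λ₁ z₁^{k−1}·conj(z_j) − λ_j z_j^{k−1}·conj(z₁) for j = 2, …, n. Let z ∈ ℂⁿ satisfy z₁ ≠ 0 and Φ(z) = 0. Then for every v ∈ ℂⁿ: if Σ_{i=1}^n λ_i z_i^{k−1} v_i = 0 and the real Fréchet derivative of Φ at z applied to v is 0, then v = 0. -/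
/-!
Multiplying the `j`-th component of `DΦ_z v = 0` by `z₁ z_j conj(z₁ z_j)` and using `Φ(z) = 0`
leaves `A (m c̄ W - c W̄) = 0` with `m = k - 1`, `c = z₁ z_j`, `W = v₁ z_j - v_j z₁` and
`A = λ₁ z₁^m conj z_j`. Comparing absolute values, `m ≠ 1` forces `W = 0`; when `z_j = 0` the
equation reduces to `λ₁ z₁^m conj v_j = 0` because `m ≥ 2`. So `v` is proportional to `z`.
Feeding this and `Φ(z) = 0` into the leaf equation gives `λ₁ z₁^m v₁ Σ |z_i|² = 0`, hence
`v₁ = 0` and then `v = 0`.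
-/

open ComplexConjugate Finset

theorem eq_zero_of_mul_eq_mul_conj {a b w : ℂ} (hab : ‖a‖ ≠ ‖b‖) (h : a * w = b * conj w) :
    w = 0 := by
  have hnorm := congrArg norm h
  rw [norm_mul, norm_mul, Complex.norm_conj] at hnorm
  exact norm_eq_zero.1 ((mul_eq_mul_right_iff.1 hnorm).resolve_left hab)

theorem mul_eq_mul_of_polar {l₀ l a b u w : ℂ} {m : ℕ} (hm : 2 ≤ m) (hl₀ : l₀ ≠ 0) (ha : a ≠ 0)
    (hP : l₀ * a ^ m * conj b = l * b ^ m * conj a)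
    (hD : l₀ * (m * a ^ (m - 1) * u) * conj b + l₀ * a ^ m * conj w
      - (l * (m * b ^ (m - 1) * w) * conj a + l * b ^ m * conj u) = 0) :
    u * b = w * a := by
  obtain ⟨p, rfl⟩ : ∃ p, m = p + 2 := ⟨m - 2, by omega⟩
  by_cases hb : b = 0
  · subst hb
    have hw : w = 0 := by simpa [hl₀, ha] using hD
    rw [hw, mul_zero, zero_mul]
  · have hA : l₀ * a ^ (p + 2) * conj b ≠ 0 := by simp [hl₀, ha, hb]
    have key : l₀ * a ^ (p + 2) * conj b *
        ((p + 2 : ℂ) * (conj a * conj b) * (u * b - w * a) - a * b * conj (u * b - w * a)) = 0 := by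
      simp only [map_sub, map_mul]
      push_cast at hD
      linear_combination (a * b * conj a * conj b) * hD
        - ((p + 2 : ℂ) * w * a * conj a * conj b + conj u * a * b * conj b) * hP
    have hnorm : ‖(p + 2 : ℂ) * (conj a * conj b)‖ ≠ ‖a * b‖ := by
      have hab : 0 < ‖a * b‖ := norm_pos_iff.2 (mul_ne_zero ha hb)
      have hp : ‖(p + 2 : ℂ)‖ = p + 2 := by exact_mod_cast Complex.norm_natCast (p + 2)
      rw [norm_mul, ← map_mul, Complex.norm_conj, hp]
      nlinarith
    exact sub_eq_zero.1 <| eq_zero_of_mul_eq_mul_conj hnorm <|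
      sub_eq_zero.1 ((mul_eq_zero.1 key).resolve_left hA)

section

variable {ι : Type*} [Fintype ι]

theorem fderiv_mul_pow_mul_conj_apply (c : ℂ) (m : ℕ) (i l : ι) (z v : ι → ℂ) :
    fderiv ℝ (fun w : ι → ℂ => c * w i ^ m * conj (w l)) z v
      = c * (m * z i ^ (m - 1) * v i) * conj (z l) + c * z i ^ m * conj (v l) := by
  have hpow := ((hasDerivAt_pow m (z i)).hasFDerivAt.restrictScalars ℝ).comp z
    (hasFDerivAt_apply (𝕜 := ℝ) i z)
  have hconj := Complex.conjCLE.hasFDerivAt.comp z (hasFDerivAt_apply (𝕜 := ℝ) l z)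
  have h : HasFDerivAt (fun w : ι → ℂ => c * w i ^ m * conj (w l)) _ z :=
    (hpow.const_mul c).mul hconj
  rw [h.fderiv]
  simp only [Function.comp_apply, add_apply, smul_apply, ContinuousLinearMap.comp_apply,
    ContinuousLinearMap.proj_apply, ContinuousLinearEquiv.coe_coe,
    ContinuousAlgEquiv.coeCLE_apply, Complex.conjCAE_apply, smul_eq_mul,
    ContinuousLinearMap.coe_restrictScalars', ContinuousLinearMap.toSpanSingleton_apply]
  ring

def polarMap (lam : ι → ℂ) (m : ℕ) (i₀ : ι) (z : ι → ℂ) (j : {j // j ≠ i₀}) : ℂ :=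
  lam i₀ * z i₀ ^ m * conj (z j) - lam j * z j ^ m * conj (z i₀)

theorem fderiv_polarMap_apply (lam : ι → ℂ) (m : ℕ) (i₀ : ι) (z v : ι → ℂ)
    (j : {j // j ≠ i₀}) :
    fderiv ℝ (polarMap lam m i₀) z v j
      = lam i₀ * (m * z i₀ ^ (m - 1) * v i₀) * conj (z j) + lam i₀ * z i₀ ^ m * conj (v j)
        - (lam j * (m * z j ^ (m - 1) * v j) * conj (z i₀) + lam j * z j ^ m * conj (v i₀)) := by
  unfold polarMap
  rw [fderiv_pi fun j => by fun_prop, ContinuousLinearMap.pi_apply,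
    fderiv_fun_sub (by fun_prop) (by fun_prop), sub_apply,
    fderiv_mul_pow_mul_conj_apply, fderiv_mul_pow_mul_conj_apply]

theorem mul_eq_mul_of_fderiv_polarMap_eq_zero {lam z v : ι → ℂ} {m : ℕ} {i₀ : ι} (hm : 2 ≤ m)
    (hl : lam i₀ ≠ 0) (hz : z i₀ ≠ 0) (hzΦ : polarMap lam m i₀ z = 0)
    (hv : fderiv ℝ (polarMap lam m i₀) z v = 0) (j : ι) (hj : j ≠ i₀) :
    v i₀ * z j = v j * z i₀ :=
  mul_eq_mul_of_polar hm hl hz (sub_eq_zero.1 (congrFun hzΦ ⟨j, hj⟩))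
    (fderiv_polarMap_apply lam m i₀ z v ⟨j, hj⟩ ▸ congrFun hv ⟨j, hj⟩)

theorem sum_conj_mul_self_ne_zero {z : ι → ℂ} {i : ι} (hz : z i ≠ 0) :
    ∑ j, conj (z j) * z j ≠ 0 := by
  have hsum : ∑ j, conj (z j) * z j = ((∑ j, ‖z j‖ ^ 2 : ℝ) : ℂ) := by
    push_cast
    exact sum_congr rfl fun j _ => Complex.conj_mul' (z j)
  rw [hsum, Complex.ofReal_ne_zero]
  exact (sum_pos' (fun j _ => by positivity) ⟨i, mem_univ i, by positivity⟩).ne'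

theorem eq_zero_of_sum_eq_zero_of_polarMap_eq_zero {lam z v : ι → ℂ} {m : ℕ} {i₀ : ι}
    (hl : lam i₀ ≠ 0) (hz : z i₀ ≠ 0) (hzΦ : polarMap lam m i₀ z = 0)
    (hrel : ∀ j, j ≠ i₀ → v i₀ * z j = v j * z i₀) (hleaf : ∑ i, lam i * z i ^ m * v i = 0) :
    v = 0 := by
  have hterm : ∀ i, lam i * z i ^ m * v i * (z i₀ * conj (z i₀))
      = lam i₀ * z i₀ ^ m * v i₀ * (conj (z i) * z i) := by
    intro i
    by_cases hi : i = i₀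
    · subst hi; ring
    · linear_combination (-(v i * z i₀)) * sub_eq_zero.1 (congrFun hzΦ ⟨i, hi⟩)
        - lam i₀ * z i₀ ^ m * conj (z i) * hrel i hi
  have hsum : lam i₀ * z i₀ ^ m * v i₀ * ∑ i, conj (z i) * z i = 0 := by
    rw [mul_sum, ← sum_congr rfl fun i _ => hterm i, ← sum_mul, hleaf, zero_mul]
  have hv₀ : v i₀ = 0 := by
    simpa [hl, hz, sum_conj_mul_self_ne_zero hz] using hsum
  funext j
  by_cases hj : j = i₀
  · rw [hj, hv₀, Pi.zero_apply]
  · simpa [hv₀, hz] using (hrel j hj).symm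

end

/-- Proposition 5.4: for the Fermat foliation (`k > 2`), at every point `z` of the polar
variety `Φ⁻¹(0)` with `z₁ ≠ 0`, the tangent space of the leaf
(`{v : Σ_i λ_i z_i^{k−1} v_i = 0}`) meets the kernel of the real Fréchet derivative of
`Φ` (the tangent space of the polar variety) only in `0`: the leaves are everywhere
transversal to `M*`. -/
theorem stmt10 (n k : ℕ) (hk : 2 < k) (lam : Fin (n + 2) → ℂ) (hlam : ∀ i, lam i ≠ 0)
    (Φ : (Fin (n + 2) → ℂ) → ({j : Fin (n + 2) // j ≠ 0} → ℂ))
    (hΦ : ∀ (z : Fin (n + 2) → ℂ) (j : {j : Fin (n + 2) // j ≠ 0}),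
      Φ z j = lam 0 * z 0 ^ (k - 1) * (starRingEnd ℂ) (z j.1)
        - lam j.1 * z j.1 ^ (k - 1) * (starRingEnd ℂ) (z 0))
    (z : Fin (n + 2) → ℂ) (hz : z 0 ≠ 0) (hzΦ : Φ z = 0) :
    ∀ v : Fin (n + 2) → ℂ,
      (∑ i, lam i * z i ^ (k - 1) * v i = 0) → fderiv ℝ Φ z v = 0 → v = 0 := by
  intro v hleaf hv
  obtain rfl : Φ = polarMap lam (k - 1) 0 := funext fun z => funext (hΦ z)
  have hrel := mul_eq_mul_of_fderiv_polarMap_eq_zero (by omega) (hlam 0) hz hzΦ hv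
  exact eq_zero_of_sum_eq_zero_of_polarMap_eq_zero (hlam 0) hz hzΦ hrel hleaf
end

section
/- Let n ≥ 2, let k > 2 be a natural number, and let λ₁, …, λₙ be nonzero complex numbers. Then the subset of the complex projective space ℙ(ℂⁿ) consisting of all points representable by some z ≠ 0 satisfying λ_j z_j^{k−1}·conj(z_l) = λ_l z_l^{k−1}·conj(z_j) for all 1 ≤ j, l ≤ n is a finite set. Equivalently, the polar variety M = {z ∈ ℂⁿ : λ_j z_j^{k−1}·conj(z_l) = λ_l z_l^{k−1}·conj(z_j) for all j, l} is the union of finitely many complex lines through the origin. -/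
open Complex

open Classical in
/-- The least index where a nonzero vector is nonzero. -/
noncomputable def leastIdx {n : ℕ} (v : Fin n → ℂ) (hv : v ≠ 0) : Fin n :=
  (Finset.univ.filter (fun j => v j ≠ 0)).min' (by
    obtain ⟨j, hj⟩ := Function.ne_iff.mp hv
    exact ⟨j, by simpa using hj⟩)

lemma leastIdx_ne {n : ℕ} (v : Fin n → ℂ) (hv : v ≠ 0) : v (leastIdx v hv) ≠ 0 := by
  classical
  have := Finset.min'_mem (Finset.univ.filter (fun j => v j ≠ 0)) (by
    obtain ⟨j, hj⟩ := Function.ne_iff.mp hv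
    exact ⟨j, by simpa using hj⟩)
  simpa [leastIdx] using this

lemma leastIdx_le {n : ℕ} (v : Fin n → ℂ) (hv : v ≠ 0) {j : Fin n} (hj : v j ≠ 0) :
    leastIdx v hv ≤ j := by
  classical
  exact Finset.min'_le _ _ (by simpa using hj)

/-- Normalization map on projective space: divide the canonical representative by its
first nonzero coordinate. -/
noncomputable def PhiMap {n : ℕ} (p : Projectivization ℂ (Fin n → ℂ)) : Fin n → ℂ :=
  fun j => p.rep j / p.rep (leastIdx p.rep p.rep_nonzero)

lemma PhiMap_injective {n : ℕ} : Function.Injective (PhiMap (n := n)) := by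
  intro p q h
  set ip := leastIdx p.rep p.rep_nonzero with hip
  set iq := leastIdx q.rep q.rep_nonzero with hiq
  have hpne : p.rep ip ≠ 0 := leastIdx_ne _ _
  have hqne : q.rep iq ≠ 0 := leastIdx_ne _ _
  have hii : ip = iq := by
    have h1 : p.rep iq ≠ 0 := by
      have := congrFun h iq
      simp only [PhiMap, ← hip, ← hiq] at this
      rw [div_self hqne] at this
      intro h0
      rw [h0, zero_div] at this
      exact one_ne_zero this.symm
    have h2 : q.rep ip ≠ 0 := by
      have := congrFun h ip
      simp only [PhiMap, ← hip, ← hiq] at this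
      rw [div_self hpne] at this
      intro h0
      rw [h0, zero_div] at this
      exact one_ne_zero this
    exact le_antisymm (leastIdx_le _ _ h1) (leastIdx_le _ _ h2)
  have hc : (p.rep ip / q.rep iq) ≠ 0 := div_ne_zero hpne hqne
  have hrep : p.rep = (p.rep ip / q.rep iq) • q.rep := by
    funext j
    have hthis := congrFun h j
    simp only [PhiMap, ← hip, ← hiq] at hthis
    have hthis' : p.rep j / p.rep ip = q.rep j / q.rep iq := hthis
    rw [div_eq_div_iff hpne hqne] at hthis'
    simp only [Pi.smul_apply, smul_eq_mul]
    rw [div_mul_eq_mul_div, eq_div_iff hqne]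
    linear_combination hthis'
  calc p = Projectivization.mk ℂ p.rep p.rep_nonzero := (Projectivization.mk_rep p).symm
    _ = Projectivization.mk ℂ q.rep q.rep_nonzero := by
        rw [Projectivization.mk_eq_mk_iff]
        exact ⟨Units.mk0 _ hc, by rw [Units.smul_def, Units.val_mk0, ← hrep]⟩
    _ = q := Projectivization.mk_rep q

/-- Key algebraic lemma: the tangency equation pins down the `k`-th power of the ratio. -/
lemma fermat_key {k : ℕ} (hk : 2 < k) (lj ll zj zl : ℂ) (hlj : lj ≠ 0) (hll : ll ≠ 0)
    (hzj : zj ≠ 0) (hzl : zl ≠ 0)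
    (hE : lj * zj ^ (k - 1) * (starRingEnd ℂ) zl = ll * zl ^ (k - 1) * (starRingEnd ℂ) zj) :
    (zj / zl) ^ k =
      (((normSq ll / normSq lj) ^ (((k : ℝ) - 2)⁻¹) : ℝ) : ℂ) * (ll / lj) := by
  have hk1 : k - 1 + 1 = k := by omega
  have hk2 : k - 1 = (k - 2) + 1 := by omega
  have hapos : 0 < normSq zj := normSq_pos.mpr hzj
  have hbpos : 0 < normSq zl := normSq_pos.mpr hzl
  have hAjpos : 0 < normSq lj := normSq_pos.mpr hlj
  have hAlpos : 0 < normSq ll := normSq_pos.mpr hll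
  have hzjk : zj ^ (k-1) * zj = zj ^ k := by rw [← pow_succ, hk1]
  have hzlk : zl ^ (k-1) * zl = zl ^ k := by rw [← pow_succ, hk1]
  have step1 : lj * zj ^ k * (normSq zl : ℂ) = ll * zl ^ k * (normSq zj : ℂ) := by
    calc lj * zj ^ k * (normSq zl : ℂ) = lj * (zj^(k-1)*zj) * (zl * (starRingEnd ℂ) zl) := by
          rw [hzjk, Complex.mul_conj]
      _ = (lj * zj^(k-1) * (starRingEnd ℂ) zl) * (zj * zl) := by ring
      _ = (ll * zl^(k-1) * (starRingEnd ℂ) zj) * (zj * zl) := by rw [hE]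
      _ = ll * (zl^(k-1)*zl) * (zj * (starRingEnd ℂ) zj) := by ring
      _ = ll * zl^k * (normSq zj : ℂ) := by rw [hzlk, Complex.mul_conj]
  have h2 := congrArg normSq hE
  simp only [map_mul, map_pow, normSq_conj] at h2
  rw [hk2, pow_succ, pow_succ] at h2
  have step2 : normSq lj * normSq zj ^ (k-2) = normSq ll * normSq zl ^ (k-2) := by
    have h3 : (normSq lj * normSq zj ^ (k-2)) * (normSq zj * normSq zl)
        = (normSq ll * normSq zl ^ (k-2)) * (normSq zj * normSq zl) := by
      linear_combination h2
    exact mul_right_cancel₀ (by positivity) h3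
  have hkR : ((k : ℝ) - 2) ≠ 0 := by
    have : (2:ℝ) < k := by exact_mod_cast hk
    linarith
  have hr : normSq zj / normSq zl = (normSq ll / normSq lj) ^ (((k : ℝ) - 2)⁻¹) := by
    have hRpos : (0:ℝ) < normSq ll / normSq lj := by positivity
    have ht : ((normSq ll / normSq lj) ^ (((k : ℝ) - 2)⁻¹)) ^ (k - 2)
        = normSq ll / normSq lj := by
      rw [← Real.rpow_natCast ((normSq ll / normSq lj) ^ (((k : ℝ) - 2)⁻¹)) (k-2),
        ← Real.rpow_mul hRpos.le]
      have : (((k : ℝ) - 2)⁻¹ * ((k - 2 : ℕ) : ℝ)) = 1 := by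
        have : ((k - 2 : ℕ) : ℝ) = (k : ℝ) - 2 := by
          push_cast [Nat.cast_sub (by omega : 2 ≤ k)]; ring
        rw [this]; field_simp
      rw [this, Real.rpow_one]
    have hq : (normSq zj / normSq zl) ^ (k - 2) = normSq ll / normSq lj := by
      rw [div_pow, div_eq_div_iff (ne_of_gt (pow_pos hbpos _)) (ne_of_gt hAjpos)]
      linear_combination step2
    have hinj := (pow_left_strictMonoOn₀ (n := k - 2) (M₀ := ℝ) (by omega)).injOn
    exact hinj (by exact le_of_lt (div_pos hapos hbpos)) (Real.rpow_nonneg hRpos.le _)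
      (hq.trans ht.symm)
  have hmain : (zj / zl) ^ k = ((normSq zj / normSq zl : ℝ) : ℂ) * (ll / lj) := by
    rw [div_pow]
    push_cast
    rw [div_mul_div_comm, div_eq_div_iff (pow_ne_zero _ hzl) (by
      exact mul_ne_zero (Complex.ofReal_ne_zero.mpr (ne_of_gt hbpos)) hlj)]
    linear_combination step1
  rw [hmain, hr]

lemma finite_kth_roots (k : ℕ) (hk : 0 < k) (c : ℂ) : {w : ℂ | w ^ k = c}.Finite := by
  apply Set.Finite.subset (Polynomial.nthRoots k c).toFinset.finite_toSet
  intro w hw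
  simp only [Finset.coe_sort_coe, Multiset.mem_toFinset, Finset.mem_coe]
  exact (Polynomial.mem_nthRoots hk).mpr hw

/-- Final assertion of Theorem 5.1 (Fermat): for `k > 2` and nonzero `λ_i`, the set of
points of complex projective space representable by some `z ≠ 0` satisfying the tangency
equations `λ_j z_j^{k−1}·conj(z_l) = λ_l z_l^{k−1}·conj(z_j)` for all `j, l` is finite;
equivalently, the polar variety of the Fermat foliation is a finite union of complex
lines through the origin. -/
theorem stmt12 (n k : ℕ) (hn : 2 ≤ n) (hk : 2 < k) (lam : Fin n → ℂ)
    (hlam : ∀ i, lam i ≠ 0) :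
    {p : Projectivization ℂ (Fin n → ℂ) | ∃ (z : Fin n → ℂ) (hz : z ≠ 0),
      Projectivization.mk ℂ z hz = p ∧
      ∀ j l : Fin n, lam j * z j ^ (k - 1) * (starRingEnd ℂ) (z l)
        = lam l * z l ^ (k - 1) * (starRingEnd ℂ) (z j)}.Finite := by
  set S := {p : Projectivization ℂ (Fin n → ℂ) | ∃ (z : Fin n → ℂ) (hz : z ≠ 0),
      Projectivization.mk ℂ z hz = p ∧
      ∀ j l : Fin n, lam j * z j ^ (k - 1) * (starRingEnd ℂ) (z l)
        = lam l * z l ^ (k - 1) * (starRingEnd ℂ) (z j)} with hS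
  -- target finite sets of values
  set F : Fin n → Set ℂ := fun j => {0} ∪ ⋃ l : Fin n,
    {w : ℂ | w ^ k = (((normSq (lam l) / normSq (lam j)) ^ (((k : ℝ) - 2)⁻¹) : ℝ) : ℂ)
      * (lam l / lam j)} with hF
  have hFfin : ∀ j, (F j).Finite := fun j =>
    (Set.finite_singleton 0).union
      (Set.finite_iUnion fun l => finite_kth_roots k (by omega) _)
  apply Set.Finite.of_finite_image (f := PhiMap) ?_ PhiMap_injective.injOn
  apply Set.Finite.subset ((Set.Finite.pi fun j => hFfin j))
  rintro g ⟨p, hp, rfl⟩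
  obtain ⟨z, hz, hmk, hEz⟩ := hp
  -- transfer the equations to the canonical representative
  obtain ⟨a, ha⟩ := (Projectivization.mk_eq_mk_iff ℂ p.rep z p.rep_nonzero hz).mp
    ((Projectivization.mk_rep p).trans hmk.symm)
  have harep : ∀ j, p.rep j = (a : ℂ) * z j := fun j => by
    rw [← ha]; simp [Units.smul_def]
  have hE : ∀ j l : Fin n, lam j * p.rep j ^ (k - 1) * (starRingEnd ℂ) (p.rep l)
      = lam l * p.rep l ^ (k - 1) * (starRingEnd ℂ) (p.rep j) := by
    intro j l
    rw [harep j, harep l, mul_pow, mul_pow, map_mul, map_mul]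
    linear_combination ((a : ℂ) ^ (k - 1) * (starRingEnd ℂ) (a : ℂ)) * hEz j l
  intro j _
  by_cases hj : p.rep j = 0
  · exact Or.inl (by simp [PhiMap, hj])
  · refine Or.inr (Set.mem_iUnion.mpr ⟨leastIdx p.rep p.rep_nonzero, ?_⟩)
    exact fermat_key hk (lam j) (lam _) (p.rep j) (p.rep _) (hlam j) (hlam _) hj
      (leastIdx_ne _ _) (hE j _)
end

section
/- Let a₁, a₂ ≥ 2 be natural numbers and λ₁, λ₂ nonzero complex numbers. Define h : ℂ² → ℂ by h(z₁,z₂) = λ₁ z₁^{a₁}·conj(z₁) + λ₂ z₂^{a₂}·conj(z₂), and F(z) = (λ₁ z₁^{a₁}, λ₂ z₂^{a₂}) ∈ ℂ². Then for every z ∈ ℂ² with z ≠ 0 and h(z) = 0, and every nonzero vector v in the real span of {F(z), i·F(z)}, the real Fréchet derivative of h at z applied to v is nonzero; i.e. the real span of {F(z), i·F(z)} meets the kernel of Dh_z (an ℝ-linear map ℂ² → ℂ) only in 0. -/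
/-!
Along the leaf direction `v = c • F(z)` (every vector of the real span of `F(z), i F(z)` is a
complex multiple of `F(z)`), the real derivative of `h` has the form `conj c · S + c · A` with
`S = ‖F₁‖² + ‖F₂‖²` and `A = A₁ + A₂`, `A_j = conj z_j · (∂_j F_j) · F_j`.
Writing `p_j = F_j conj z_j`, one has `A_j = (a_j / ‖z_j‖²) p_j²`, and on the polar variety
`p₂ = -p₁`, so `A₁` and `A₂` point in the same direction and `‖A‖ = a₁‖F₁‖² + a₂‖F₂‖² > ‖S‖`.
Hence `conj c · S + c · A = 0` forces `c = 0`.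
-/

open ComplexConjugate

theorem exists_smul_eq_of_mem_span_I_smul {E : Type*} [AddCommGroup E] [Module ℂ E] {x v : E}
    (hv : v ∈ Submodule.span ℝ {x, Complex.I • x}) : ∃ c : ℂ, v = c • x := by
  obtain ⟨α, β, rfl⟩ := Submodule.mem_span_pair.mp hv
  refine ⟨α + β * Complex.I, ?_⟩
  rw [add_smul, mul_smul, Complex.coe_smul, Complex.coe_smul]

theorem Complex.eq_zero_of_conj_mul_add_mul_eq_zero {S A c : ℂ} (hSA : ‖S‖ < ‖A‖)
    (h : conj c * S + c * A = 0) : c = 0 := by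
  have hnorm : ‖c‖ * ‖A‖ = ‖c‖ * ‖S‖ := by
    rw [← norm_mul, eq_neg_of_add_eq_zero_right h, norm_neg, norm_mul, Complex.norm_conj]
  by_contra hc
  exact hSA.ne' (mul_left_cancel₀ (norm_ne_zero_iff.mpr hc) hnorm)

theorem HasDerivAt.hasFDerivAt_mul_conj {f : ℂ → ℂ} {f' x : ℂ} (hf : HasDerivAt f f' x) :
    HasFDerivAt (fun y => f y * conj y)
      (f x • Complex.conjCLE.toContinuousLinearMap +
        conj x • (ContinuousLinearMap.smulRight (1 : ℂ →L[ℂ] ℂ) f').restrictScalars ℝ) x :=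
  (hf.hasFDerivAt.restrictScalars ℝ).mul Complex.conjCLE.toContinuousLinearMap.hasFDerivAt

theorem fderiv_add_mul_conj_apply {f₁ f₂ : ℂ → ℂ} {f₁' f₂' : ℂ} {z : ℂ × ℂ}
    (hf₁ : HasDerivAt f₁ f₁' z.1) (hf₂ : HasDerivAt f₂ f₂' z.2) (v : ℂ × ℂ) :
    fderiv ℝ (fun z : ℂ × ℂ => f₁ z.1 * conj z.1 + f₂ z.2 * conj z.2) z v =
      f₁ z.1 * conj v.1 + conj z.1 * (v.1 * f₁') +
        (f₂ z.2 * conj v.2 + conj z.2 * (v.2 * f₂')) := by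
  have H₁ := hf₁.hasFDerivAt_mul_conj.comp z (hasFDerivAt_fst (p := z))
  have H₂ := hf₂.hasFDerivAt_mul_conj.comp z (hasFDerivAt_snd (p := z))
  have H : HasFDerivAt (fun z : ℂ × ℂ => f₁ z.1 * conj z.1 + f₂ z.2 * conj z.2) _ z :=
    H₁.add H₂
  rw [H.fderiv]
  simp

section PolarTerm

variable {l z : ℂ} {a : ℕ}

theorem mul_pow_eq_zero_of_mul_conj_eq_zero (ha : a ≠ 0) (h : l * z ^ a * conj z = 0) :
    l * z ^ a = 0 := by
  rcases mul_eq_zero.mp h with h | h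
  · exact h
  · simp_all

theorem conj_mul_deriv_mul_eq_smul_sq (hz : z ≠ 0) :
    conj z * (l * (a * z ^ (a - 1))) * (l * z ^ a) =
      ((a : ℝ) / ‖z‖ ^ 2) • (l * z ^ a * conj z) ^ 2 := by
  obtain _ | n := a
  · simp
  have hzz : z * conj z ≠ 0 := by simpa using hz
  rw [Complex.real_smul, Complex.ofReal_div, Complex.ofReal_pow, ← Complex.mul_conj']
  field_simp
  push_cast
  ring

theorem norm_conj_mul_deriv_mul :
    ‖conj z * (l * (a * z ^ (a - 1))) * (l * z ^ a)‖ = a * ‖l * z ^ a‖ ^ 2 := by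
  obtain _ | n := a
  · simp
  simp only [norm_mul, norm_pow, Complex.norm_conj, Complex.norm_natCast, Nat.add_sub_cancel]
  push_cast
  ring

end PolarTerm

theorem norm_mul_conj_add_lt_norm_conj_mul_deriv_add {a₁ a₂ : ℕ} (ha₁ : 2 ≤ a₁) (ha₂ : 2 ≤ a₂)
    {l₁ l₂ z₁ z₂ : ℂ}
    (hpolar : l₁ * z₁ ^ a₁ * conj z₁ + l₂ * z₂ ^ a₂ * conj z₂ = 0)
    (hne : (l₁ * z₁ ^ a₁, l₂ * z₂ ^ a₂) ≠ 0) :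
    ‖l₁ * z₁ ^ a₁ * conj (l₁ * z₁ ^ a₁) + l₂ * z₂ ^ a₂ * conj (l₂ * z₂ ^ a₂)‖ <
      ‖conj z₁ * (l₁ * (a₁ * z₁ ^ (a₁ - 1))) * (l₁ * z₁ ^ a₁) +
        conj z₂ * (l₂ * (a₂ * z₂ ^ (a₂ - 1))) * (l₂ * z₂ ^ a₂)‖ := by
  set w₁ := l₁ * z₁ ^ a₁
  set w₂ := l₂ * z₂ ^ a₂
  have hp₁ : w₁ * conj z₁ ≠ 0 := by
    intro hp₁
    have hp₂ : w₂ * conj z₂ = 0 := by linear_combination hpolar - hp₁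
    exact hne (Prod.ext (mul_pow_eq_zero_of_mul_conj_eq_zero (by omega) hp₁)
      (mul_pow_eq_zero_of_mul_conj_eq_zero (by omega) hp₂))
  have hp₂ : w₂ * conj z₂ = -(w₁ * conj z₁) := by linear_combination hpolar
  have hz₁ : z₁ ≠ 0 := by rintro rfl; simp at hp₁
  have hz₂ : z₂ ≠ 0 := by rintro rfl; simp [hp₁] at hp₂
  have hw₁ : w₁ ≠ 0 := left_ne_zero_of_mul hp₁
  -- `p₂² = p₁²`, so both summands of `A` are nonnegative multiples of `p₁²`
  have hsame : SameRay ℝ (conj z₁ * (l₁ * (a₁ * z₁ ^ (a₁ - 1))) * w₁)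
      (conj z₂ * (l₂ * (a₂ * z₂ ^ (a₂ - 1))) * w₂) := by
    rw [conj_mul_deriv_mul_eq_smul_sq hz₁, conj_mul_deriv_mul_eq_smul_sq hz₂, hp₂, neg_sq]
    exact sameRay_smul_smul_of_mul_nonneg (by positivity)
  rw [hsame.norm_add, norm_conj_mul_deriv_mul, norm_conj_mul_deriv_mul]
  calc ‖w₁ * conj w₁ + w₂ * conj w₂‖ = ‖w₁‖ ^ 2 + ‖w₂‖ ^ 2 := by
        rw [Complex.mul_conj', Complex.mul_conj', ← Complex.ofReal_pow, ← Complex.ofReal_pow,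
          ← Complex.ofReal_add, Complex.norm_real, Real.norm_of_nonneg (by positivity)]
    _ < a₁ * ‖w₁‖ ^ 2 + a₂ * ‖w₂‖ ^ 2 := by
        have h₁ : (2 : ℝ) ≤ a₁ := by exact_mod_cast ha₁
        have h₂ : (2 : ℝ) ≤ a₂ := by exact_mod_cast ha₂
        have hpos : 0 < ‖w₁‖ ^ 2 := by positivity
        nlinarith [sq_nonneg ‖w₂‖]

theorem stmt13_general (a₁ a₂ : ℕ) (ha₁ : 2 ≤ a₁) (ha₂ : 2 ≤ a₂) (l₁ l₂ : ℂ)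
    (h : ℂ × ℂ → ℂ)
    (hh : ∀ z : ℂ × ℂ,
      h z = l₁ * z.1 ^ a₁ * (starRingEnd ℂ) z.1 + l₂ * z.2 ^ a₂ * (starRingEnd ℂ) z.2)
    (F : ℂ × ℂ → ℂ × ℂ)
    (hF : ∀ z : ℂ × ℂ, F z = (l₁ * z.1 ^ a₁, l₂ * z.2 ^ a₂)) :
    ∀ z : ℂ × ℂ, z ≠ 0 → h z = 0 →
      ∀ v ∈ Submodule.span ℝ {F z, Complex.I • F z}, fderiv ℝ h z v = 0 → v = 0 := by
  intro z _ hpolar v hv hdv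
  obtain ⟨c, rfl⟩ := exists_smul_eq_of_mem_span_I_smul hv
  by_cases hF₀ : F z = 0
  · rw [hF₀, smul_zero]
  rw [hF] at hF₀ hdv ⊢
  rw [funext hh, fderiv_add_mul_conj_apply ((hasDerivAt_pow a₁ z.1).const_mul l₁)
    ((hasDerivAt_pow a₂ z.2).const_mul l₂)] at hdv
  have hc : conj c *
        (l₁ * z.1 ^ a₁ * conj (l₁ * z.1 ^ a₁) + l₂ * z.2 ^ a₂ * conj (l₂ * z.2 ^ a₂)) +
      c * (conj z.1 * (l₁ * (a₁ * z.1 ^ (a₁ - 1))) * (l₁ * z.1 ^ a₁) +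
        conj z.2 * (l₂ * (a₂ * z.2 ^ (a₂ - 1))) * (l₂ * z.2 ^ a₂)) = 0 := by
    rw [← hdv]
    simp only [Prod.smul_fst, Prod.smul_snd, smul_eq_mul, map_mul]
    ring
  rw [hh] at hpolar
  rw [Complex.eq_zero_of_conj_mul_add_mul_eq_zero
    (norm_mul_conj_add_lt_norm_conj_mul_deriv_add ha₁ ha₂ hpolar hF₀) hc, zero_smul]

/-- Example 2.5, case i): for the foliation of `ℂ²` defined by the diagonal vector field
`F(z) = (λ₁z₁^{a₁}, λ₂z₂^{a₂})`, the polar variety with respect to `Q(z) = |z₁|² + |z₂|²`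
is the zero set of `h(z) = λ₁z₁^{a₁}·conj(z₁) + λ₂z₂^{a₂}·conj(z₂)`, and at every point
`z ≠ 0` of it the real span of `{F(z), i·F(z)}` (the tangent space of the leaf) meets the
kernel of the real Fréchet derivative of `h` only in `0`: the foliation is transversal to
the polar variety away from the origin. -/
theorem stmt13 (a₁ a₂ : ℕ) (ha₁ : 2 ≤ a₁) (ha₂ : 2 ≤ a₂) (l₁ l₂ : ℂ)
    (hl₁ : l₁ ≠ 0) (hl₂ : l₂ ≠ 0)
    (h : ℂ × ℂ → ℂ)
    (hh : ∀ z : ℂ × ℂ,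
      h z = l₁ * z.1 ^ a₁ * (starRingEnd ℂ) z.1 + l₂ * z.2 ^ a₂ * (starRingEnd ℂ) z.2)
    (F : ℂ × ℂ → ℂ × ℂ)
    (hF : ∀ z : ℂ × ℂ, F z = (l₁ * z.1 ^ a₁, l₂ * z.2 ^ a₂)) :
    ∀ z : ℂ × ℂ, z ≠ 0 → h z = 0 →
      ∀ v ∈ Submodule.span ℝ {F z, Complex.I • F z}, fderiv ℝ h z v = 0 → v = 0 :=
  stmt13_general a₁ a₂ ha₁ ha₂ l₁ l₂ h hh F hF
end

section
/- Let a₁, a₂ ≥ 2 be natural numbers and λ₁, λ₂ nonzero complex numbers. Define h : ℂ² → ℂ by h(z₁,z₂) = λ₁ z₂^{a₂}·conj(z₁) + λ₂ z₁^{a₁}·conj(z₂), and F(z) = (λ₁ z₂^{a₂}, λ₂ z₁^{a₁}) ∈ ℂ². Then for every z ∈ ℂ² with z ≠ 0 and h(z) = 0, and every nonzero vector v in the real span of {F(z), i·F(z)}, the real Fréchet derivative of h at z applied to v is nonzero; i.e. the real span of {F(z), i·F(z)} meets the kernel of Dh_z (an ℝ-linear map ℂ² → ℂ) only in 0. -/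
/-!
Along the leaf direction `v = c • F(z)` the real derivative of `h` is
`c * A + conj c * ‖F(z)‖²`, where `A = polarDerivCoeff z` and `‖F(z)‖² = |F₁|² + |F₂|²`;
it can vanish for `c ≠ 0` only if `|A| = ‖F(z)‖²`. On the axes `A = 0` because `a₁, a₂ ≥ 2`.
Off the axes, `h(z) = 0` gives `|F₁||z₁| = |F₂||z₂|`, which turns `|A|` into
`a₂|F₂|² + a₁|F₁|² ≥ 2‖F(z)‖²`.
-/

open Complex ComplexConjugate

lemma eq_zero_of_mul_add_conj_mul_eq_zero {a b c : ℂ} (hab : ‖a‖ ≠ ‖b‖)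
    (h : c * a + conj c * b = 0) : c = 0 := by
  by_contra hc
  have hnorm := congrArg norm (eq_neg_of_add_eq_zero_left h)
  rw [norm_mul, norm_neg, norm_mul, norm_conj] at hnorm
  exact hab (mul_left_cancel₀ (norm_ne_zero_iff.mpr hc) hnorm)

lemma exists_eq_smul_of_mem_span_pair_I_smul {E : Type*} [AddCommGroup E] [Module ℂ E]
    [Module ℝ E] [IsScalarTower ℝ ℂ E] {v w : E} (hv : v ∈ Submodule.span ℝ {w, I • w}) :
    ∃ c : ℂ, v = c • w := by
  obtain ⟨s, t, rfl⟩ := Submodule.mem_span_pair.mp hv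
  refine ⟨s + t * I, ?_⟩
  rw [add_smul, mul_smul, RCLike.real_smul_eq_coe_smul (K := ℂ) s,
    RCLike.real_smul_eq_coe_smul (K := ℂ) t]
  rfl

lemma Prod.sq_norm_add_sq_norm_pos {E F : Type*} [NormedAddCommGroup E] [NormedAddCommGroup F]
    {x : E × F} (hx : x ≠ 0) : 0 < ‖x.1‖ ^ 2 + ‖x.2‖ ^ 2 := by
  rcases not_and_or.mp (mt Prod.ext_iff.mpr hx) with h | h
  · exact add_pos_of_pos_of_nonneg (pow_pos (norm_pos_iff.mpr h) 2) (sq_nonneg _)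
  · exact add_pos_of_nonneg_of_pos (sq_nonneg _) (pow_pos (norm_pos_iff.mpr h) 2)

section TwistedField

variable (a₁ a₂ : ℕ) (l₁ l₂ : ℂ)

def twistedField (z : ℂ × ℂ) : ℂ × ℂ := (l₁ * z.2 ^ a₂, l₂ * z.1 ^ a₁)

def polarFunction (z : ℂ × ℂ) : ℂ := l₁ * z.2 ^ a₂ * conj z.1 + l₂ * z.1 ^ a₁ * conj z.2

def polarDerivCoeff (z : ℂ × ℂ) : ℂ :=
  l₁ * l₂ * (a₂ * z.2 ^ (a₂ - 1) * z.1 ^ a₁ * conj z.1 + a₁ * z.1 ^ (a₁ - 1) * z.2 ^ a₂ * conj z.2)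

variable {a₁ a₂ l₁ l₂}

lemma twistedField_ne_zero (hl₁ : l₁ ≠ 0) (hl₂ : l₂ ≠ 0) {z : ℂ × ℂ} (hz : z ≠ 0) :
    twistedField a₁ a₂ l₁ l₂ z ≠ 0 := by
  contrapose! hz
  simp_all [twistedField, Prod.ext_iff]

lemma fderiv_polarFunction_apply (z v : ℂ × ℂ) :
    fderiv ℝ (polarFunction a₁ a₂ l₁ l₂) z v =
      l₁ * (a₂ * z.2 ^ (a₂ - 1) * v.2) * conj z.1 + l₁ * z.2 ^ a₂ * conj v.1
        + (l₂ * (a₁ * z.1 ^ (a₁ - 1) * v.1) * conj z.2 + l₂ * z.1 ^ a₁ * conj v.2) := by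
  have hpow₁ := (hasDerivAt_pow a₁ z.1).comp_hasFDerivAt (𝕜 := ℝ) z hasFDerivAt_fst
  have hpow₂ := (hasDerivAt_pow a₂ z.2).comp_hasFDerivAt (𝕜 := ℝ) z hasFDerivAt_snd
  have hconj₁ := conjCLE.hasFDerivAt.comp z (hasFDerivAt_fst (𝕜 := ℝ) (p := z))
  have hconj₂ := conjCLE.hasFDerivAt.comp z (hasFDerivAt_snd (𝕜 := ℝ) (p := z))
  have H : HasFDerivAt (polarFunction a₁ a₂ l₁ l₂) _ z :=
    ((hpow₂.const_mul l₁).mul hconj₁).add ((hpow₁.const_mul l₂).mul hconj₂)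
  rw [H.fderiv]
  simp only [Function.comp_apply, ContinuousAlgEquiv.coe_coeCLE, conjCAE_apply,
    add_apply, smul_apply, ContinuousLinearMap.comp_apply,
    ContinuousLinearMap.coe_fst', ContinuousLinearMap.coe_snd', ContinuousLinearEquiv.coe_coe,
    ContinuousAlgEquiv.coeCLE_apply, smul_eq_mul]
  ring

lemma fderiv_polarFunction_smul_twistedField (z : ℂ × ℂ) (c : ℂ) :
    fderiv ℝ (polarFunction a₁ a₂ l₁ l₂) z (c • twistedField a₁ a₂ l₁ l₂ z) =
      c * polarDerivCoeff a₁ a₂ l₁ l₂ z +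
        conj c * ((‖(twistedField a₁ a₂ l₁ l₂ z).1‖ ^ 2 +
          ‖(twistedField a₁ a₂ l₁ l₂ z).2‖ ^ 2 : ℝ) : ℂ) := by
  rw [fderiv_polarFunction_apply]
  push_cast
  simp only [twistedField, polarDerivCoeff, Prod.smul_fst, Prod.smul_snd, smul_eq_mul, map_mul,
    ← mul_conj']
  ring

lemma polarDerivCoeff_eq_zero (ha₁ : 2 ≤ a₁) (ha₂ : 2 ≤ a₂) {z : ℂ × ℂ}
    (hz : z.1 = 0 ∨ z.2 = 0) : polarDerivCoeff a₁ a₂ l₁ l₂ z = 0 := by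
  have h₁ : a₁ - 1 ≠ 0 := by omega
  have h₂ : a₂ - 1 ≠ 0 := by omega
  rcases hz with hz | hz <;> simp [polarDerivCoeff, hz, h₁, h₂]

lemma norm_twistedField_fst_mul (z : ℂ × ℂ) (hz : polarFunction a₁ a₂ l₁ l₂ z = 0) :
    ‖(twistedField a₁ a₂ l₁ l₂ z).1‖ * ‖z.1‖ = ‖(twistedField a₁ a₂ l₁ l₂ z).2‖ * ‖z.2‖ := by
  simpa [twistedField] using congrArg norm (eq_neg_of_add_eq_zero_left hz)

lemma norm_polarDerivCoeff (ha₁ : 1 ≤ a₁) (ha₂ : 1 ≤ a₂) {z : ℂ × ℂ} (hz₁ : z.1 ≠ 0)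
    (hz₂ : z.2 ≠ 0) (hz : polarFunction a₁ a₂ l₁ l₂ z = 0) :
    ‖polarDerivCoeff a₁ a₂ l₁ l₂ z‖ =
      a₂ * ‖(twistedField a₁ a₂ l₁ l₂ z).2‖ ^ 2 + a₁ * ‖(twistedField a₁ a₂ l₁ l₂ z).1‖ ^ 2 := by
  set P := ‖(twistedField a₁ a₂ l₁ l₂ z).1‖
  set Q := ‖(twistedField a₁ a₂ l₁ l₂ z).2‖
  have hrel : P * ‖z.1‖ = Q * ‖z.2‖ := norm_twistedField_fst_mul z hz
  have hmul : polarDerivCoeff a₁ a₂ l₁ l₂ z * (z.1 * z.2) =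
      (twistedField a₁ a₂ l₁ l₂ z).1 * (twistedField a₁ a₂ l₁ l₂ z).2 *
        ((a₂ * ‖z.1‖ ^ 2 + a₁ * ‖z.2‖ ^ 2 : ℝ) : ℂ) := by
    obtain ⟨b₁, rfl⟩ := Nat.exists_eq_add_of_le' ha₁
    obtain ⟨b₂, rfl⟩ := Nat.exists_eq_add_of_le' ha₂
    simp only [polarDerivCoeff, twistedField, Nat.add_sub_cancel]
    push_cast
    simp only [← mul_conj']
    ring
  have hnorm := congrArg norm hmul
  simp only [norm_mul, norm_real] at hnorm
  rw [Real.norm_of_nonneg (by positivity)] at hnorm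
  have hpos : 0 < ‖z.1‖ * ‖z.2‖ := mul_pos (norm_pos_iff.mpr hz₁) (norm_pos_iff.mpr hz₂)
  refine mul_right_cancel₀ hpos.ne' ?_
  linear_combination hnorm + (a₂ * Q * ‖z.1‖ - a₁ * P * ‖z.2‖) * hrel

lemma norm_polarDerivCoeff_ne (ha₁ : 2 ≤ a₁) (ha₂ : 2 ≤ a₂) (hl₁ : l₁ ≠ 0) (hl₂ : l₂ ≠ 0)
    {z : ℂ × ℂ} (hz : z ≠ 0) (hz₀ : polarFunction a₁ a₂ l₁ l₂ z = 0) :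
    ‖polarDerivCoeff a₁ a₂ l₁ l₂ z‖ ≠
      ‖((‖(twistedField a₁ a₂ l₁ l₂ z).1‖ ^ 2 +
        ‖(twistedField a₁ a₂ l₁ l₂ z).2‖ ^ 2 : ℝ) : ℂ)‖ := by
  have hpos := Prod.sq_norm_add_sq_norm_pos (twistedField_ne_zero (a₁ := a₁) (a₂ := a₂) hl₁ hl₂ hz)
  rw [norm_real, Real.norm_of_nonneg hpos.le]
  by_cases hz₁₂ : z.1 = 0 ∨ z.2 = 0
  · rw [polarDerivCoeff_eq_zero ha₁ ha₂ hz₁₂, norm_zero]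
    exact hpos.ne
  · obtain ⟨hz₁, hz₂⟩ := not_or.mp hz₁₂
    rw [norm_polarDerivCoeff (by omega) (by omega) hz₁ hz₂ hz₀]
    have ha₁' : (2 : ℝ) ≤ a₁ := by exact_mod_cast ha₁
    have ha₂' : (2 : ℝ) ≤ a₂ := by exact_mod_cast ha₂
    nlinarith [sq_nonneg ‖(twistedField a₁ a₂ l₁ l₂ z).1‖,
      sq_nonneg ‖(twistedField a₁ a₂ l₁ l₂ z).2‖]

end TwistedField

/-- Example 2.5, case ii): for the foliation of `ℂ²` defined by the twisted vector field
`F(z) = (λ₁z₂^{a₂}, λ₂z₁^{a₁})`, the polar variety with respect to `Q(z) = |z₁|² + |z₂|²`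
is the zero set of `h(z) = λ₁z₂^{a₂}·conj(z₁) + λ₂z₁^{a₁}·conj(z₂)`, and at every point
`z ≠ 0` of it the real span of `{F(z), i·F(z)}` (the tangent space of the leaf) meets the
kernel of the real Fréchet derivative of `h` only in `0`: the foliation is transversal to
the polar variety away from the origin. -/
theorem stmt14 (a₁ a₂ : ℕ) (ha₁ : 2 ≤ a₁) (ha₂ : 2 ≤ a₂) (l₁ l₂ : ℂ)
    (hl₁ : l₁ ≠ 0) (hl₂ : l₂ ≠ 0)
    (h : ℂ × ℂ → ℂ)
    (hh : ∀ z : ℂ × ℂ,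
      h z = l₁ * z.2 ^ a₂ * (starRingEnd ℂ) z.1 + l₂ * z.1 ^ a₁ * (starRingEnd ℂ) z.2)
    (F : ℂ × ℂ → ℂ × ℂ)
    (hF : ∀ z : ℂ × ℂ, F z = (l₁ * z.2 ^ a₂, l₂ * z.1 ^ a₁)) :
    ∀ z : ℂ × ℂ, z ≠ 0 → h z = 0 →
      ∀ v ∈ Submodule.span ℝ {F z, Complex.I • F z}, fderiv ℝ h z v = 0 → v = 0 := by
  obtain rfl : h = polarFunction a₁ a₂ l₁ l₂ := funext hh
  obtain rfl : F = twistedField a₁ a₂ l₁ l₂ := funext hF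
  intro z hz hz₀ v hv hDv
  obtain ⟨c, rfl⟩ := exists_eq_smul_of_mem_span_pair_I_smul hv
  rw [fderiv_polarFunction_smul_twistedField] at hDv
  rw [eq_zero_of_mul_add_conj_mul_eq_zero (norm_polarDerivCoeff_ne ha₁ ha₂ hl₁ hl₂ hz hz₀) hDv,
    zero_smul]
end

section
/- Let λ₁, λ₂, λ₃, λ₄ be nonzero complex numbers with |λ₁|² − 4|λ₄|² > 0. Define h : ℂ⁴ → ℂ by h(z) = λ₁ z₂²·conj(z₁) + λ₂ z₃²·conj(z₂) + λ₃ z₄²·conj(z₃) + λ₄ z₁²·conj(z₄), and F(z) = (λ₁ z₂², λ₂ z₃², λ₃ z₄², λ₄ z₁²) ∈ ℂ⁴. Then there exists a point z = (z₁, z₂, z₃, 0) ∈ ℂ⁴ with z ≠ 0 and h(z) = 0, and a nonzero vector v in the real span of {F(z), i·F(z)}, such that the real Fréchet derivative of h at z applied to v is zero. -/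
/-!
Take `z = (1, s, w, 0)` with `s` real and `l₂ w² = -l₁ s`; then `h z = l₁ s² + l₂ w² s = 0`.
Along `v = conj l₁ • F z` the real derivative of `h` at `z` works out to
`l₁ (|l₄|² - |l₁|² (s² - s⁴))`, so it remains to solve `s² - s⁴ = |l₄|² / |l₁|²` in real
numbers, which is possible since the right-hand side is at most `1/4`.
-/

open ComplexConjugate

theorem exists_sq_sub_pow_four_eq {q : ℝ} (hq : q ≤ 1 / 4) : ∃ s : ℝ, s ^ 2 - s ^ 4 = q := by
  set e := √(1 - 4 * q)
  have he : e ^ 2 = 1 - 4 * q := Real.sq_sqrt (by linarith)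
  have ht : 0 ≤ (1 + e) / 2 := by positivity
  refine ⟨√((1 + e) / 2), ?_⟩
  rw [show (4 : ℕ) = 2 * 2 from rfl, pow_mul, Real.sq_sqrt ht]
  linear_combination -he / 4

theorem Complex.smul_mem_span_real_pair_I_smul {E : Type*} [AddCommGroup E] [Module ℂ E]
    (c : ℂ) (x : E) : c • x ∈ Submodule.span ℝ {x, I • x} := by
  refine Submodule.mem_span_pair.mpr ⟨c.re, c.im, ?_⟩
  rw [RCLike.real_smul_eq_coe_smul (K := ℂ), RCLike.real_smul_eq_coe_smul (K := ℂ), smul_smul,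
    ← add_smul]
  exact congrArg (· • x) c.re_add_im

theorem hasFDerivAt_mul_sq_mul_conj {ι : Type*} [Fintype ι] (c : ℂ) (j k : ι) (z : ι → ℂ) :
    HasFDerivAt (fun y : ι → ℂ => c * y j ^ 2 * conj (y k))
      ((c * (2 * z j * conj (z k))) • ContinuousLinearMap.proj (R := ℝ) j
        + (c * z j ^ 2) • Complex.conjCLE.toContinuousLinearMap.comp (ContinuousLinearMap.proj k))
      z := by
  have hj := hasFDerivAt_apply (𝕜 := ℝ) j z
  have hk := Complex.conjCLE.toContinuousLinearMap.hasFDerivAt.comp z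
    (hasFDerivAt_apply (𝕜 := ℝ) k z)
  refine (((hj.pow 2).const_mul c).mul hk).congr_fderiv ?_
  ext u
  simp only [add_apply, smul_apply, smul_eq_mul,
    ContinuousLinearMap.comp_apply, ContinuousLinearMap.proj_apply, ContinuousLinearEquiv.coe_coe,
    Complex.conjCLE_apply, Function.comp_apply, Nat.add_one_sub_one, pow_one, nsmul_eq_mul,
    Nat.cast_ofNat]
  ring

theorem stmt15_general (l₁ l₂ l₃ l₄ : ℂ) (hl₁ : l₁ ≠ 0) (hl₂ : l₂ ≠ 0)
    (hl₄ : l₄ ≠ 0) (hcond : ‖l₁‖ ^ 2 - 4 * ‖l₄‖ ^ 2 > 0)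
    (h : (Fin 4 → ℂ) → ℂ)
    (hh : ∀ z : Fin 4 → ℂ,
      h z = l₁ * z 1 ^ 2 * (starRingEnd ℂ) (z 0) + l₂ * z 2 ^ 2 * (starRingEnd ℂ) (z 1)
        + l₃ * z 3 ^ 2 * (starRingEnd ℂ) (z 2) + l₄ * z 0 ^ 2 * (starRingEnd ℂ) (z 3))
    (F : (Fin 4 → ℂ) → (Fin 4 → ℂ))
    (hF : ∀ z : Fin 4 → ℂ, F z = ![l₁ * z 1 ^ 2, l₂ * z 2 ^ 2, l₃ * z 3 ^ 2, l₄ * z 0 ^ 2]) :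
    ∃ z : Fin 4 → ℂ, z 3 = 0 ∧ z ≠ 0 ∧ h z = 0 ∧
      ∃ v ∈ Submodule.span ℝ {F z, Complex.I • F z}, v ≠ 0 ∧ fderiv ℝ h z v = 0 := by
  have hl₁' : 0 < ‖l₁‖ ^ 2 := by positivity
  obtain ⟨s, hs⟩ := exists_sq_sub_pow_four_eq (q := ‖l₄‖ ^ 2 / ‖l₁‖ ^ 2) <| by
    rw [div_le_iff₀ hl₁']; linarith
  have hnorm : conj l₄ * l₄ = conj l₁ * l₁ * ((s : ℂ) ^ 2 - (s : ℂ) ^ 4) := by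
    have : ‖l₄‖ ^ 2 = ‖l₁‖ ^ 2 * (s ^ 2 - s ^ 4) := by rw [hs, mul_div_cancel₀ _ hl₁'.ne']
    rw [Complex.conj_mul', Complex.conj_mul']
    exact_mod_cast this
  obtain ⟨w, hw⟩ := IsAlgClosed.exists_pow_nat_eq (-l₁ * s / l₂) two_pos
  rw [eq_div_iff hl₂] at hw
  set z : Fin 4 → ℂ := ![1, s, w, 0]
  have hdh := ((((hasFDerivAt_mul_sq_mul_conj l₁ 1 0 z).add
    (hasFDerivAt_mul_sq_mul_conj l₂ 2 1 z)).add (hasFDerivAt_mul_sq_mul_conj l₃ 3 2 z)).add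
    (hasFDerivAt_mul_sq_mul_conj l₄ 0 3 z)).congr_of_eventuallyEq (.of_forall hh)
  refine ⟨z, rfl, fun hz => one_ne_zero (congrFun hz 0), ?_,
    conj l₁ • F z, Complex.smul_mem_span_real_pair_I_smul _ _, ?_, ?_⟩
  · rw [hh]
    simp only [z, Matrix.cons_val, map_one, map_zero, Complex.conj_ofReal]
    linear_combination (s : ℂ) * hw
  · intro hv
    simpa [hF, z, hl₁, hl₄] using congrFun hv 3
  · rw [hdh.fderiv, hF]
    simp only [z, Matrix.cons_val, Matrix.smul_cons, smul_eq_mul, Matrix.smul_empty,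
      add_apply, smul_apply, ContinuousLinearMap.proj_apply,
      ContinuousLinearMap.comp_apply, ContinuousLinearEquiv.coe_coe, Complex.conjCLE_apply,
      map_mul, map_pow, map_one, map_zero, Complex.conj_ofReal, Complex.conj_conj]
    have hw' : conj w ^ 2 * conj l₂ = -conj l₁ * s := by simpa using congrArg conj hw
    linear_combination (2 * s * l₁ * conj l₁ + l₁ * conj l₂ * conj w ^ 2) * hw
      - l₁ ^ 2 * s * hw' + l₁ * hnorm

/-- Example 2.5, case iii): for the foliation of `ℂ⁴` defined by the twisted vector field
`F(z) = (λ₁z₂², λ₂z₃², λ₃z₄², λ₄z₁²)`, if `|λ₁|² − 4|λ₄|² > 0` then the foliation fails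
to be transversal to the polar variety `{h = 0}` at some point of the form
`(z₁, z₂, z₃, 0) ≠ 0`: there is a nonzero vector in the real span of `{F(z), i·F(z)}`
killed by the real Fréchet derivative of `h` at that point. -/
theorem stmt15 (l₁ l₂ l₃ l₄ : ℂ) (hl₁ : l₁ ≠ 0) (hl₂ : l₂ ≠ 0) (hl₃ : l₃ ≠ 0)
    (hl₄ : l₄ ≠ 0) (hcond : ‖l₁‖ ^ 2 - 4 * ‖l₄‖ ^ 2 > 0)
    (h : (Fin 4 → ℂ) → ℂ)
    (hh : ∀ z : Fin 4 → ℂ,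
      h z = l₁ * z 1 ^ 2 * (starRingEnd ℂ) (z 0) + l₂ * z 2 ^ 2 * (starRingEnd ℂ) (z 1)
        + l₃ * z 3 ^ 2 * (starRingEnd ℂ) (z 2) + l₄ * z 0 ^ 2 * (starRingEnd ℂ) (z 3))
    (F : (Fin 4 → ℂ) → (Fin 4 → ℂ))
    (hF : ∀ z : Fin 4 → ℂ, F z = ![l₁ * z 1 ^ 2, l₂ * z 2 ^ 2, l₃ * z 3 ^ 2, l₄ * z 0 ^ 2]) :
    ∃ z : Fin 4 → ℂ, z 3 = 0 ∧ z ≠ 0 ∧ h z = 0 ∧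
      ∃ v ∈ Submodule.span ℝ {F z, Complex.I • F z}, v ≠ 0 ∧ fderiv ℝ h z v = 0 :=
  stmt15_general l₁ l₂ l₃ l₄ hl₁ hl₂ hl₄ hcond h hh F hF
end

section
/- Let a₁, b₁, a₂, b₂ be positive real numbers with a₁ > a₂ and b₁ > b₂. Then the set of (z₁, z₂) ∈ ℂ² satisfying z₂·(a₁·Re z₁ − i·b₁·Im z₁) = z₁·(a₂·Re z₂ − i·b₂·Im z₂) is exactly the union of the two coordinate axes {z₁ = 0} ∪ {z₂ = 0}. -/
/-- Example 6.3: for positive reals with `a₁ > a₂` and `b₁ > b₂`, the polar variety of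
the foliation of `ℂ²` by the fibers of `f(z₁,z₂) = z₁² + z₂²` relative to the Morse
function `Q_Λ = a₁(Re z₁)² + b₁(Im z₁)² + a₂(Re z₂)² + b₂(Im z₂)²`, cut out by
`z₂(a₁ Re z₁ − i b₁ Im z₁) = z₁(a₂ Re z₂ − i b₂ Im z₂)`, is exactly the union of the two
coordinate axes. -/
theorem stmt16 (a₁ b₁ a₂ b₂ : ℝ) (ha₁ : 0 < a₁) (hb₁ : 0 < b₁) (ha₂ : 0 < a₂)
    (hb₂ : 0 < b₂) (haa : a₂ < a₁) (hbb : b₂ < b₁) :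
    {p : ℂ × ℂ | p.2 * (((a₁ * p.1.re : ℝ) : ℂ) - Complex.I * ((b₁ * p.1.im : ℝ) : ℂ))
        = p.1 * (((a₂ * p.2.re : ℝ) : ℂ) - Complex.I * ((b₂ * p.2.im : ℝ) : ℂ))}
      = {p : ℂ × ℂ | p.1 = 0} ∪ {p : ℂ × ℂ | p.2 = 0} := by
  ext ⟨z, w⟩
  simp only [Set.mem_setOf_eq, Set.mem_union]
  constructor
  · intro h
    by_cases hz : z = 0
    · exact Or.inl hz
    · right
      have hre := congrArg Complex.re h
      have him := congrArg Complex.im h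
      simp only [Complex.mul_re, Complex.mul_im, Complex.sub_re, Complex.sub_im,
        Complex.ofReal_re, Complex.ofReal_im, Complex.I_re, Complex.I_im,
        Complex.mul_re, Complex.mul_im] at hre him
      set K : ℝ := (a₁ - a₂) * (a₁ + b₂) * z.re ^ 2 + (b₁ - b₂) * (a₂ + b₁) * z.im ^ 2
        with hK
      have hKpos : 0 < K := by
        rw [hK]
        rcases Complex.ext_iff.not.mp hz with h'
        push_neg at h'
        simp only [Complex.zero_re, Complex.zero_im] at h'
        have c1 : (0:ℝ) < (a₁ - a₂) * (a₁ + b₂) := mul_pos (by linarith) (by linarith)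
        have c2 : (0:ℝ) < (b₁ - b₂) * (a₂ + b₁) := mul_pos (by linarith) (by linarith)
        by_cases hx : z.re = 0
        · have hy : z.im ≠ 0 := by tauto
          have h2 : 0 < z.im ^ 2 := by positivity
          nlinarith [mul_nonneg c1.le (sq_nonneg z.re), mul_pos c2 h2]
        · have h2 : 0 < z.re ^ 2 := by positivity
          nlinarith [mul_pos c1 h2, mul_nonneg c2.le (sq_nonneg z.im)]
      have hwre : w.re * K = 0 := by
        rw [hK]
        linear_combination ((a₁ + b₂) * z.re) * hre - ((b₁ - b₂) * z.im) * him
      have hwim : w.im * K = 0 := by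
        rw [hK]
        linear_combination ((a₂ + b₁) * z.im) * hre + ((a₁ - a₂) * z.re) * him
      have h1 : w.re = 0 := by
        rcases mul_eq_zero.mp hwre with h' | h'
        · exact h'
        · exact absurd h' (ne_of_gt hKpos)
      have h2 : w.im = 0 := by
        rcases mul_eq_zero.mp hwim with h' | h'
        · exact h'
        · exact absurd h' (ne_of_gt hKpos)
      exact Complex.ext h1 h2
  · rintro (h | h) <;> subst h <;> simp
end
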